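/- There exist T₀ > 0, α > 0, C > 0 such that for all T ≥ T₀ and B ∈ (-1/(3T), 1/(3T)), the positive normalized groundstate u_B^{T} of the weighted Robin operator H_B^{T} satisfies the Agmon decay estimate ‖e^{ατ} u_B^{T}‖_{L²((0,T);(1-Bτ)dτ)} ≤ C. -/

import Mathlib

open Real Set MeasureTheory

/-
The flux `(1 - B t) u'` has derivative `-lam (1 - B t) u`. If `lam ≥ 0` the flux stays below its
Robin value `-u 0`, and `u` vanishes before `t = 4/3`; so `lam < 0` and the flux increases. Then
`u` is decreasing, and `u' ≥ -(3/2) u 0`, so `u ≥ u 0 / 2` on `[0, 1/3]` and the normalisation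
bounds `u 0`. Where `u > 0`, the rate `r = -u'/u` solves a Riccati equation with drift at most
`1/20`; comparison with explicit barriers gives `r ≥ 1/2` on `[0, T - 5]`, hence
`u t ≤ e^{(5 - t)/2} u 0`, which makes the integral against `e^{t/2}` bounded uniformly in `T`.
-/

/-- `lam` is an eigenvalue of the weighted Robin operator
`H_B^{T} = -∂²_τ + B(1-Bτ)⁻¹∂_τ` on `(0,T)` with `u'(0) = -u(0)`, `u(T) = 0`. -/
def IsWeightedRobinEigenvalue (B T lam : ℝ) : Prop :=
  ∃ u : ℝ → ℝ, ContDiff ℝ 2 u ∧ (∃ τ ∈ Icc (0:ℝ) T, u τ ≠ 0) ∧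
    deriv u 0 = - u 0 ∧ u T = 0 ∧
    ∀ τ ∈ Icc (0:ℝ) T,
      - deriv (deriv u) τ + B * (1 - B*τ)⁻¹ * deriv u τ = lam * u τ

theorem monotoneOn_Icc_of_hasDerivAt_nonneg {f f' : ℝ → ℝ} {a b : ℝ}
    (hf : ∀ t ∈ Icc a b, HasDerivAt f (f' t) t) (hf' : ∀ t ∈ Ioo a b, 0 ≤ f' t) :
    MonotoneOn f (Icc a b) :=
  monotoneOn_of_hasDerivWithinAt_nonneg (convex_Icc a b)
    (fun t ht => (hf t ht).continuousAt.continuousWithinAt)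
    (fun t ht => by
      rw [interior_Icc] at ht ⊢
      exact (hf t (Ioo_subset_Icc_self ht)).hasDerivWithinAt)
    (by rwa [interior_Icc])

theorem antitoneOn_Icc_of_hasDerivAt_nonpos {f f' : ℝ → ℝ} {a b : ℝ}
    (hf : ∀ t ∈ Icc a b, HasDerivAt f (f' t) t) (hf' : ∀ t ∈ Ioo a b, f' t ≤ 0) :
    AntitoneOn f (Icc a b) :=
  antitoneOn_of_hasDerivWithinAt_nonpos (convex_Icc a b)
    (fun t ht => (hf t ht).continuousAt.continuousWithinAt)
    (fun t ht => by
      rw [interior_Icc] at ht ⊢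
      exact (hf t (Ioo_subset_Icc_self ht)).hasDerivWithinAt)
    (by rwa [interior_Icc])

theorem integral_exp_neg_mul_le {c : ℝ} (hc : 0 < c) (T : ℝ) :
    ∫ t in (0:ℝ)..T, exp (-(c * t)) ≤ c⁻¹ := by
  have h := intervalIntegral.integral_comp_mul_left (a := 0) (b := T) exp (neg_ne_zero.2 hc.ne')
  simp only [neg_mul, mul_zero, integral_exp, exp_zero, smul_eq_mul, inv_neg] at h
  rw [h]
  nlinarith [exp_pos (-(c * T)), inv_pos.2 hc]

section Riccati

/-! For a positive solution of `u'' = e u' - lam u`, the quotient `r = -u'/u` solves the Riccati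
equation `r' = r² + e r + lam`, and `u' + β u ≤ 0` says `β ≤ r`. The two lemmas below are the
comparison principle for this equation, written without dividing by `u`. -/

variable {u u' e β β' : ℝ → ℝ} {lam a b : ℝ}

theorem deriv_add_mul_nonpos_of_riccati
    (hu : ∀ t ∈ Icc a b, HasDerivAt u (u' t) t)
    (hu' : ∀ t ∈ Icc a b, HasDerivAt u' (e t * u' t - lam * u t) t)
    (hβ : ∀ t ∈ Icc a b, HasDerivAt β (β' t) t) (hpos : ∀ t ∈ Ico a b, 0 < u t)
    (hsub : ∀ t ∈ Ico a b, β' t - lam - β t ^ 2 - e t * β t < 0)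
    (ha : u' a + β a * u a ≤ 0) :
    ∀ t ∈ Icc a b, u' t + β t * u t ≤ 0 := by
  have hg : ∀ t ∈ Icc a b, HasDerivAt (fun s => u' s + β s * u s)
      (e t * u' t - lam * u t + (β' t * u t + β t * u' t)) t :=
    fun t ht => (hu' t ht).add ((hβ t ht).mul (hu t ht))
  refine image_le_of_deriv_right_lt_deriv_boundary' (B := fun _ => 0) (B' := fun _ => 0)
    (fun t ht => (hg t ht).continuousAt.continuousWithinAt)
    (fun t ht => (hg t (Ico_subset_Icc_self ht)).hasDerivWithinAt) ha continuousOn_const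
    (fun _ _ => hasDerivWithinAt_const _ _ _) fun t ht hzero => ?_
  calc e t * u' t - lam * u t + (β' t * u t + β t * u' t)
      = u t * (β' t - lam - β t ^ 2 - e t * β t) := by linear_combination (e t + β t) * hzero
    _ < 0 := mul_neg_of_pos_of_neg (hpos t ht) (hsub t ht)

theorem deriv_add_mul_nonneg_of_riccati
    (hu : ∀ t ∈ Icc a b, HasDerivAt u (u' t) t)
    (hu' : ∀ t ∈ Icc a b, HasDerivAt u' (e t * u' t - lam * u t) t)
    (hβ : ∀ t ∈ Icc a b, HasDerivAt β (β' t) t) (hpos : ∀ t ∈ Ico a b, 0 < u t)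
    (hsuper : ∀ t ∈ Ico a b, 0 < β' t - lam - β t ^ 2 - e t * β t)
    (ha : 0 ≤ u' a + β a * u a) :
    ∀ t ∈ Icc a b, 0 ≤ u' t + β t * u t := by
  have hg : ∀ t ∈ Icc a b, HasDerivAt (fun s => u' s + β s * u s)
      (e t * u' t - lam * u t + (β' t * u t + β t * u' t)) t :=
    fun t ht => (hu' t ht).add ((hβ t ht).mul (hu t ht))
  refine image_le_of_deriv_right_lt_deriv_boundary' (f := fun _ => 0) (f' := fun _ => 0)
    continuousOn_const (fun _ _ => hasDerivWithinAt_const _ _ _) ha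
    (fun t ht => (hg t ht).continuousAt.continuousWithinAt)
    (fun t ht => (hg t (Ico_subset_Icc_self ht)).hasDerivWithinAt) fun t ht hzero => ?_
  calc (0 : ℝ) < u t * (β' t - lam - β t ^ 2 - e t * β t) := mul_pos (hpos t ht) (hsuper t ht)
    _ = e t * u' t - lam * u t + (β' t * u t + β t * u' t) := by
      linear_combination (e t + β t) * hzero

end Riccati

section Weight

variable {B T t : ℝ}

theorem weight_mem_Ioo (hBT : |B| * T < 1 / 3) (ht : t ∈ Icc 0 T) :
    1 - B * t ∈ Ioo (2 / 3) (4 / 3) := by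
  have : |B * t| < 1 / 3 := by
    rw [abs_mul, abs_of_nonneg ht.1]
    exact (mul_le_mul_of_nonneg_left ht.2 (abs_nonneg B)).trans_lt hBT
  constructor <;> linarith [abs_lt.1 this]

theorem weight_pos (hBT : |B| * T < 1 / 3) (ht : t ∈ Icc 0 T) : 0 < 1 - B * t := by
  linarith [(weight_mem_Ioo hBT ht).1]

theorem abs_drift_le (hT : 10 ≤ T) (hBT : |B| * T < 1 / 3) (ht : t ∈ Icc 0 T) :
    |B * (1 - B * t)⁻¹| ≤ 1 / 20 := by
  have hB : |B| ≤ 1 / 30 := by nlinarith [abs_nonneg B]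
  have hw := weight_pos hBT ht
  rw [abs_mul, abs_inv, abs_of_pos hw, ← div_eq_mul_inv, div_le_iff₀ hw]
  linarith [(weight_mem_Ioo hBT ht).1]

end Weight

structure IsPositiveRobinEigenfunction (B T lam : ℝ) (u u' : ℝ → ℝ) : Prop where
  hasDerivAt : ∀ t, HasDerivAt u (u' t) t
  hasDerivAt_deriv : ∀ t ∈ Icc 0 T, HasDerivAt u' (B * (1 - B * t)⁻¹ * u' t - lam * u t) t
  robin : u' 0 = -u 0
  dirichlet : u T = 0
  pos : ∀ t ∈ Ico 0 T, 0 < u t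

namespace IsPositiveRobinEigenfunction

variable {B T lam : ℝ} {u u' : ℝ → ℝ}

theorem of_contDiff (hu : ContDiff ℝ 2 u) (hpos : ∀ t ∈ Ico 0 T, 0 < u t)
    (hrobin : deriv u 0 = -u 0) (hdirichlet : u T = 0)
    (hode : ∀ t ∈ Icc 0 T, -deriv (deriv u) t + B * (1 - B * t)⁻¹ * deriv u t = lam * u t) :
    IsPositiveRobinEigenfunction B T lam u (deriv u) where
  hasDerivAt t := (hu.differentiable (by norm_num)).differentiableAt.hasDerivAt
  hasDerivAt_deriv t ht := by
    rw [show B * (1 - B * t)⁻¹ * deriv u t - lam * u t = deriv (deriv u) t by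
      linarith [hode t ht]]
    have hu' : ContDiff ℝ 1 (deriv u) := hu.deriv'
    exact (hu'.differentiable one_ne_zero).differentiableAt.hasDerivAt
  robin := hrobin
  dirichlet := hdirichlet
  pos := hpos

theorem continuous (h : IsPositiveRobinEigenfunction B T lam u u') : Continuous u :=
  continuous_iff_continuousAt.2 fun t => (h.hasDerivAt t).continuousAt

theorem nonneg (h : IsPositiveRobinEigenfunction B T lam u u') (t : ℝ) (ht : t ∈ Icc 0 T) :
    0 ≤ u t := by
  rcases ht.2.lt_or_eq with htT | rfl
  · exact (h.pos t ⟨ht.1, htT⟩).le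
  · exact h.dirichlet.ge

theorem hasDerivAt_flux (h : IsPositiveRobinEigenfunction B T lam u u') (hBT : |B| * T < 1 / 3)
    (t : ℝ) (ht : t ∈ Icc 0 T) :
    HasDerivAt (fun s => (1 - B * s) * u' s) (-lam * ((1 - B * t) * u t)) t := by
  have hw := (weight_pos hBT ht).ne'
  refine ((((hasDerivAt_id' t).const_mul B).const_sub 1).mul
    (h.hasDerivAt_deriv t ht)).congr_deriv ?_
  field_simp
  ring

theorem flux_monotoneOn (h : IsPositiveRobinEigenfunction B T lam u u') (hBT : |B| * T < 1 / 3)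
    (hlam : lam ≤ 0) : MonotoneOn (fun s => (1 - B * s) * u' s) (Icc 0 T) :=
  monotoneOn_Icc_of_hasDerivAt_nonneg (h.hasDerivAt_flux hBT) fun t ht =>
    mul_nonneg (neg_nonneg.2 hlam) (mul_nonneg (weight_pos hBT (Ioo_subset_Icc_self ht)).le
      (h.nonneg t (Ioo_subset_Icc_self ht)))

theorem flux_antitoneOn (h : IsPositiveRobinEigenfunction B T lam u u') (hBT : |B| * T < 1 / 3)
    (hlam : 0 ≤ lam) : AntitoneOn (fun s => (1 - B * s) * u' s) (Icc 0 T) :=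
  antitoneOn_Icc_of_hasDerivAt_nonpos (h.hasDerivAt_flux hBT) fun t ht =>
    mul_nonpos_of_nonpos_of_nonneg (neg_nonpos.2 hlam)
      (mul_nonneg (weight_pos hBT (Ioo_subset_Icc_self ht)).le
        (h.nonneg t (Ioo_subset_Icc_self ht)))

theorem lam_neg (h : IsPositiveRobinEigenfunction B T lam u u') (hT : 4 / 3 < T)
    (hBT : |B| * T < 1 / 3) : lam < 0 := by
  by_contra! hlam
  have hu0 := h.pos 0 ⟨le_rfl, by linarith⟩
  have hslope : ∀ t ∈ Icc 0 (4 / 3), u' t ≤ -(3 / 4) * u 0 := fun t ht => by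
    have htT : t ∈ Icc 0 T := ⟨ht.1, by linarith [ht.2]⟩
    have hflux := h.flux_antitoneOn hBT hlam ⟨le_rfl, by linarith⟩ htT ht.1
    simp only [mul_zero, sub_zero, one_mul, h.robin] at hflux
    have hw := weight_mem_Ioo hBT htT
    nlinarith [hw.1, hw.2]
  have hanti : AntitoneOn (fun s => u s + 3 / 4 * u 0 * s) (Icc 0 (4 / 3)) :=
    antitoneOn_Icc_of_hasDerivAt_nonpos
      (fun t _ => (h.hasDerivAt t).add ((hasDerivAt_id' t).const_mul (3 / 4 * u 0)))
      fun t ht => by linarith [hslope t (Ioo_subset_Icc_self ht)]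
  have := hanti ⟨le_rfl, by norm_num⟩ ⟨by norm_num, le_rfl⟩ (by norm_num)
  linarith [h.pos (4 / 3) ⟨by norm_num, hT⟩]

theorem deriv_neg (h : IsPositiveRobinEigenfunction B T lam u u') (hBT : |B| * T < 1 / 3)
    (hlam : lam < 0) (t₀ : ℝ) (ht₀ : t₀ ∈ Ico 0 T) : u' t₀ < 0 := by
  by_contra! hnonneg
  have hmono : MonotoneOn u (Icc t₀ T) :=
    monotoneOn_Icc_of_hasDerivAt_nonneg (fun t _ => h.hasDerivAt t) fun t ht => by
      have htT : t ∈ Icc 0 T := ⟨ht₀.1.trans ht.1.le, ht.2.le⟩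
      have hflux := h.flux_monotoneOn hBT hlam.le (Ico_subset_Icc_self ht₀) htT ht.1.le
      have hw₀ := weight_pos hBT (Ico_subset_Icc_self ht₀)
      exact nonneg_of_mul_nonneg_right ((mul_nonneg hw₀.le hnonneg).trans hflux)
        (weight_pos hBT htT)
  have := hmono ⟨le_rfl, ht₀.2.le⟩ ⟨ht₀.2.le, le_rfl⟩ ht₀.2.le
  linarith [h.pos t₀ ht₀, h.dirichlet]

theorem antitoneOn (h : IsPositiveRobinEigenfunction B T lam u u') (hBT : |B| * T < 1 / 3)
    (hlam : lam < 0) : AntitoneOn u (Icc 0 T) :=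
  antitoneOn_Icc_of_hasDerivAt_nonpos (fun t _ => h.hasDerivAt t) fun t ht =>
    (h.deriv_neg hBT hlam t (Ioo_subset_Ico_self ht)).le

theorem apply_zero_div_two_le (h : IsPositiveRobinEigenfunction B T lam u u') (hT : 1 / 3 ≤ T)
    (hBT : |B| * T < 1 / 3) (hlam : lam < 0) (t : ℝ) (ht : t ∈ Icc 0 (1 / 3)) :
    u 0 / 2 ≤ u t := by
  have hu0 := h.nonneg 0 ⟨le_rfl, by linarith⟩
  have hslope : ∀ s ∈ Icc 0 (1 / 3), -(3 / 2) * u 0 ≤ u' s := fun s hs => by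
    have hsT : s ∈ Icc 0 T := ⟨hs.1, by linarith [hs.2]⟩
    have hflux := h.flux_monotoneOn hBT hlam.le ⟨le_rfl, by linarith⟩ hsT hs.1
    simp only [mul_zero, sub_zero, one_mul, h.robin] at hflux
    have hw := weight_mem_Ioo hBT hsT
    nlinarith [hw.1, hw.2]
  have hmono : MonotoneOn (fun s => u s + 3 / 2 * u 0 * s) (Icc 0 (1 / 3)) :=
    monotoneOn_Icc_of_hasDerivAt_nonneg
      (fun s _ => (h.hasDerivAt s).add ((hasDerivAt_id' s).const_mul (3 / 2 * u 0)))
      fun s hs => by linarith [hslope s (Ioo_subset_Icc_self hs)]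
  have := hmono ⟨le_rfl, by norm_num⟩ ht ht.1
  simp only [mul_zero, add_zero] at this
  nlinarith [ht.2]

theorem apply_zero_sq_le_of_integral_eq_one (h : IsPositiveRobinEigenfunction B T lam u u')
    (hT : 1 / 3 ≤ T) (hBT : |B| * T < 1 / 3) (hlam : lam < 0)
    (hnorm : ∫ t in (0:ℝ)..T, u t ^ 2 * (1 - B * t) = 1) : u 0 ^ 2 ≤ 18 := by
  have hcont : Continuous fun t => u t ^ 2 * (1 - B * t) := by
    have := h.continuous
    fun_prop
  have hlow : ∀ t ∈ Icc (0:ℝ) (1 / 3), (u 0 / 2) ^ 2 * (2 / 3) ≤ u t ^ 2 * (1 - B * t) :=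
    fun t ht => by
      have htT : t ∈ Icc 0 T := ⟨ht.1, by linarith [ht.2]⟩
      have hu0 := h.nonneg 0 ⟨le_rfl, by linarith⟩
      exact mul_le_mul
        (pow_le_pow_left₀ (by positivity) (h.apply_zero_div_two_le hT hBT hlam t ht) 2)
        (weight_mem_Ioo hBT htT).1.le (by norm_num) (sq_nonneg _)
  calc u 0 ^ 2 = 18 * ∫ _ in (0:ℝ)..(1 / 3), (u 0 / 2) ^ 2 * (2 / 3) := by
        simp only [intervalIntegral.integral_const, smul_eq_mul]; ring
    _ ≤ 18 * ∫ t in (0:ℝ)..(1 / 3), u t ^ 2 * (1 - B * t) := by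
        gcongr
        exact intervalIntegral.integral_mono_on (by norm_num) intervalIntegrable_const
          (hcont.intervalIntegrable _ _) hlow
    _ ≤ 18 * ∫ t in (0:ℝ)..T, u t ^ 2 * (1 - B * t) := by
        gcongr
        refine intervalIntegral.integral_mono_interval le_rfl (by norm_num) hT ?_
          (hcont.intervalIntegrable _ _)
        refine (ae_restrict_mem measurableSet_Ioc).mono fun t ht => ?_
        have htT : t ∈ Icc 0 T := Ioc_subset_Icc_self ht
        exact mul_nonneg (sq_nonneg _) (weight_pos hBT htT).le
    _ = 18 := by rw [hnorm, mul_one]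

theorem deriv_add_half_nonpos (h : IsPositiveRobinEigenfunction B T lam u u') (hT : 10 ≤ T)
    (hBT : |B| * T < 1 / 3) (t : ℝ) (ht : t ∈ Icc 0 (T - 5)) : u' t + u t / 2 ≤ 0 := by
  have hdrift : ∀ s ∈ Icc 0 T, |B * (1 - B * s)⁻¹| ≤ 1 / 20 := fun s hs =>
    abs_drift_le hT hBT hs
  rcases lt_or_ge (-(1 / 2)) lam with hlam | hlam
  · -- `r ≥ 1` persists: `1` is a strict subsolution of the Riccati equation.
    have hsub : Icc 0 (T - 5) ⊆ Icc 0 T := Icc_subset_Icc le_rfl (by linarith)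
    have hle := deriv_add_mul_nonpos_of_riccati (β := fun _ => 1) (β' := fun _ => 0)
      (fun s _ => h.hasDerivAt s) (fun s hs => h.hasDerivAt_deriv s (hsub hs))
      (fun s _ => hasDerivAt_const s 1)
      (fun s hs => h.pos s ⟨hs.1, hs.2.trans_le (by linarith)⟩)
      (fun s hs => by linarith [(abs_le.1 (hdrift s (hsub (Ico_subset_Icc_self hs)))).1])
      (by rw [h.robin]; linarith) t ht
    linarith [h.nonneg t (hsub ht)]
  · -- once `r < 1/2`, the Riccati equation drives `r` to `0` within time `4`.
    by_contra! hgt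
    have hsub : Icc t (t + 4) ⊆ Icc 0 T := Icc_subset_Icc ht.1 (by linarith [ht.2])
    have hge := deriv_add_mul_nonneg_of_riccati
      (β := fun s => (t + 4 - s) / 8) (β' := fun _ => -1 / 8)
      (fun s _ => h.hasDerivAt s) (fun s hs => h.hasDerivAt_deriv s (hsub hs))
      (fun s _ => by simpa using ((hasDerivAt_id' s).const_sub (t + 4)).div_const 8)
      (fun s hs => h.pos s ⟨ht.1.trans hs.1, by linarith [hs.2, ht.2]⟩)
      (fun s hs => by
        have he := abs_le.1 (hdrift s (hsub (Ico_subset_Icc_self hs)))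
        have hβ₀ : 0 ≤ (t + 4 - s) / 8 := by linarith [hs.2]
        have hβ₁ : (t + 4 - s) / 8 ≤ 1 / 2 := by linarith [hs.1]
        nlinarith [mul_le_mul_of_nonneg_left hβ₁ hβ₀, mul_le_mul_of_nonneg_right he.1 hβ₀])
      (by linarith) (t + 4) ⟨by linarith, le_rfl⟩
    have := h.deriv_neg hBT (by linarith) (t + 4) ⟨by linarith [ht.1], by linarith [ht.2]⟩
    simp only [sub_self, zero_div, zero_mul, add_zero] at hge
    linarith

theorem le_exp_mul_apply_zero (h : IsPositiveRobinEigenfunction B T lam u u') (hT : 10 ≤ T)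
    (hBT : |B| * T < 1 / 3) (t : ℝ) (ht : t ∈ Icc 0 T) : u t ≤ exp ((5 - t) / 2) * u 0 := by
  have hlam := h.lam_neg (by linarith) hBT
  have hdecay : AntitoneOn (fun s => u s * exp (s / 2)) (Icc 0 (T - 5)) :=
    antitoneOn_Icc_of_hasDerivAt_nonpos
      (fun s _ => (h.hasDerivAt s).mul ((hasDerivAt_id' s).div_const 2).exp)
      fun s hs => by
        have := h.deriv_add_half_nonpos hT hBT s (Ioo_subset_Icc_self hs)
        have := exp_pos (s / 2)
        nlinarith
  set s := min t (T - 5)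
  have hs : s ∈ Icc 0 (T - 5) := ⟨le_min ht.1 (by linarith), min_le_right _ _⟩
  have hsT : s ∈ Icc 0 T := ⟨hs.1, by linarith [hs.2]⟩
  have hts : u t ≤ u s := h.antitoneOn hBT hlam hsT ht (min_le_left _ _)
  have hs0 : u s * exp (s / 2) ≤ u 0 := by
    simpa using hdecay ⟨le_rfl, by linarith⟩ hs hs.1
  have hexp : exp (-(s / 2)) ≤ exp ((5 - t) / 2) :=
    exp_le_exp.2 (by linarith [show t - 5 ≤ s from le_min (by linarith) (by linarith [ht.2])])
  calc u t ≤ u s := hts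
    _ ≤ exp (-(s / 2)) * u 0 := by
      rw [exp_neg, inv_mul_eq_div, le_div_iff₀ (exp_pos _)]; exact hs0
    _ ≤ exp ((5 - t) / 2) * u 0 := by gcongr; exact h.nonneg 0 ⟨le_rfl, by linarith⟩

theorem integral_exp_mul_sq_le (h : IsPositiveRobinEigenfunction B T lam u u') (hT : 10 ≤ T)
    (hBT : |B| * T < 1 / 3) (hnorm : ∫ t in (0:ℝ)..T, u t ^ 2 * (1 - B * t) = 1) :
    ∫ t in (0:ℝ)..T, exp (t / 2) * u t ^ 2 * (1 - B * t) ≤ 48 * exp 5 := by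
  have hu0 :=
    h.apply_zero_sq_le_of_integral_eq_one (by linarith) hBT (h.lam_neg (by linarith) hBT) hnorm
  have hcont := h.continuous
  have hpt : ∀ t ∈ Icc 0 T,
      exp (t / 2) * u t ^ 2 * (1 - B * t) ≤ 24 * exp 5 * exp (-(1 / 2 * t)) := fun t ht => by
    have hw := weight_mem_Ioo hBT ht
    have hsq : u t ^ 2 ≤ (exp ((5 - t) / 2) * u 0) ^ 2 :=
      pow_le_pow_left₀ (h.nonneg t ht) (h.le_exp_mul_apply_zero hT hBT t ht) 2
    have hexp : exp (t / 2) * exp ((5 - t) / 2) ^ 2 = exp 5 * exp (-(1 / 2 * t)) := by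
      rw [← exp_nat_mul, ← exp_add, ← exp_add]; ring_nf
    calc exp (t / 2) * u t ^ 2 * (1 - B * t)
        ≤ exp (t / 2) * (exp ((5 - t) / 2) * u 0) ^ 2 * (4 / 3) := by
          gcongr
          · exact (weight_pos hBT ht).le
          · exact hw.2.le
      _ = 4 / 3 * u 0 ^ 2 * (exp 5 * exp (-(1 / 2 * t))) := by rw [← hexp]; ring
      _ ≤ 4 / 3 * 18 * (exp 5 * exp (-(1 / 2 * t))) := by gcongr
      _ = 24 * exp 5 * exp (-(1 / 2 * t)) := by ring
  calc ∫ t in (0:ℝ)..T, exp (t / 2) * u t ^ 2 * (1 - B * t)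
      ≤ ∫ t in (0:ℝ)..T, 24 * exp 5 * exp (-(1 / 2 * t)) :=
        intervalIntegral.integral_mono_on (by linarith)
          (Continuous.intervalIntegrable (by fun_prop) _ _)
          (Continuous.intervalIntegrable (by fun_prop) _ _) hpt
    _ ≤ 24 * exp 5 * (1 / 2)⁻¹ := by
        rw [intervalIntegral.integral_const_mul]
        gcongr
        exact integral_exp_neg_mul_le (by norm_num) T
    _ = 48 * exp 5 := by ring

end IsPositiveRobinEigenfunction

theorem stmt9_general (lam1 : ℝ → ℝ → ℝ) :
    ∃ T₀ > (0:ℝ), ∃ α > (0:ℝ), ∃ C > (0:ℝ), ∀ T ≥ T₀, ∀ B ∈ Ioo (-(1/(3*T))) (1/(3*T)),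
      ∀ u : ℝ → ℝ, ContDiff ℝ 2 u →
        (∀ τ ∈ Ico (0:ℝ) T, 0 < u τ) →
        deriv u 0 = - u 0 → u T = 0 →
        (∀ τ ∈ Icc (0:ℝ) T,
          - deriv (deriv u) τ + B * (1 - B*τ)⁻¹ * deriv u τ = lam1 B T * u τ) →
        (∫ τ in (0:ℝ)..T, (u τ)^2 * (1 - B*τ)) = 1 →
        Real.sqrt (∫ τ in (0:ℝ)..T, Real.exp (2*α*τ) * (u τ)^2 * (1 - B*τ)) ≤ C := by
  refine ⟨10, by norm_num, 1 / 4, by norm_num, 7 * exp (5 / 2), by positivity, ?_⟩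
  intro T hT B hB u hu hpos hrobin hdirichlet hode hnorm
  have hBT : |B| * T < 1 / 3 :=
    calc |B| * T < 1 / (3 * T) * T := by gcongr; exact abs_lt.2 hB
      _ = 1 / 3 := by field_simp
  have h := IsPositiveRobinEigenfunction.of_contDiff hu hpos hrobin hdirichlet hode
  have hint := h.integral_exp_mul_sq_le (ge_iff_le.1 hT) hBT hnorm
  rw [sqrt_le_left (by positivity)]
  calc ∫ τ in (0:ℝ)..T, exp (2 * (1 / 4) * τ) * u τ ^ 2 * (1 - B * τ)
      = ∫ τ in (0:ℝ)..T, exp (τ / 2) * u τ ^ 2 * (1 - B * τ) := by congr 1; ext τ; ring_nf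
    _ ≤ 48 * exp 5 := hint
    _ ≤ 49 * exp 5 := by linarith [exp_pos 5]
    _ = (7 * exp (5 / 2)) ^ 2 := by rw [mul_pow, ← exp_nat_mul]; norm_num

/-- Agmon decay of the positive normalized groundstate `u_B^{T}`:
`‖e^{ατ} u_B^{T}‖_{L²((0,T);(1-Bτ)dτ)} ≤ C` uniformly in `T ≥ T₀`, `|B| < 1/(3T)`. -/
theorem stmt9 (lam1 : ℝ → ℝ → ℝ)
    (hmin : ∀ B T, 0 < T → |B| * T < 1/3 →
      IsWeightedRobinEigenvalue B T (lam1 B T) ∧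
      ∀ l, IsWeightedRobinEigenvalue B T l → lam1 B T ≤ l) :
    ∃ T₀ > (0:ℝ), ∃ α > (0:ℝ), ∃ C > (0:ℝ), ∀ T ≥ T₀, ∀ B ∈ Ioo (-(1/(3*T))) (1/(3*T)),
      ∀ u : ℝ → ℝ, ContDiff ℝ 2 u →
        (∀ τ ∈ Ico (0:ℝ) T, 0 < u τ) →
        deriv u 0 = - u 0 → u T = 0 →
        (∀ τ ∈ Icc (0:ℝ) T,
          - deriv (deriv u) τ + B * (1 - B*τ)⁻¹ * deriv u τ = lam1 B T * u τ) →
        (∫ τ in (0:ℝ)..T, (u τ)^2 * (1 - B*τ)) = 1 →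
        Real.sqrt (∫ τ in (0:ℝ)..T, Real.exp (2*α*τ) * (u τ)^2 * (1 - B*τ)) ≤ C :=
  stmt9_general lam1
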